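/- arXiv:0812.3233 — 5 statements merged into one kernel-verified Lean document; each statement's English description precedes it below -/
import Mathlib

section
/- If C is a self-dual code over F_3 of length n, then 4 divides n. -/
open scoped BigOperators

/-- The dual code with respect to the standard bilinear form. -/
def dualCode {F : Type*} [Field F] {n : ℕ} (C : Submodule F (Fin n → F)) :
    Submodule F (Fin n → F) where
  carrier := {y | ∀ x ∈ C, ∑ i, x i * y i = 0}
  zero_mem' := by intro x hx; simp
  add_mem' := by
    intro y z hy hz x hx
    simp [Pi.add_apply, mul_add, Finset.sum_add_distrib, hy x hx, hz x hx]
  smul_mem' := by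
    intro c y hy x hx
    simp [mul_left_comm, ← Finset.mul_sum, hy x hx]

/-- The Hamming weight of a vector: the number of nonzero coordinates. -/
def wt {F : Type*} [Zero F] [DecidableEq F] {n : ℕ} (v : Fin n → F) : ℕ :=
  (Finset.univ.filter fun i => v i ≠ 0).card

/-!
A self-dual code `C` of length `n` and dimension `k` is a Lagrangian subspace for the dot product,
so `n = 2k`. In a basis made of a basis of `C` followed by a basis of a complement, the Gram matrix
of the dot product is `[[0, X], [Xᵀ, Y]]`, whose determinant is `(-1)^k (det X)^2`. Gram
determinants in two bases differ by a nonzero square factor, and in the standard basis the Gram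
matrix is `1`. Hence `(-1)^k` is a square in `𝔽₃`; as `-1` is not, `k` is even and `4 ∣ n`.
-/

open Matrix Module

theorem Equiv.Perm.sign_sumComm (m : Type*) [Fintype m] [DecidableEq m] :
    Equiv.Perm.sign (Equiv.sumComm m m) = (-1) ^ Fintype.card m := by
  have h : (Equiv.boolProdEquivSum m).permCongr
      (Equiv.prodCongrLeft fun _ => Equiv.swap false true) = Equiv.sumComm m m := by
    ext ⟨⟩ <;> rfl
  rw [← h, Equiv.Perm.sign_permCongr, Equiv.Perm.sign_prodCongrLeft]
  simp

theorem Matrix.det_fromBlocks_zero₁₁ {m R : Type*} [Fintype m] [DecidableEq m] [CommRing R]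
    (X Z Y : Matrix m m R) :
    (fromBlocks 0 X Z Y).det = (-1) ^ Fintype.card m * X.det * Z.det := by
  have h := det_permute' (Equiv.sumComm m m) (fromBlocks 0 X Z Y)
  have hswap : (fromBlocks 0 X Z Y).submatrix id (Equiv.sumComm m m) = fromBlocks X 0 Y Z := by
    ext (i | i) (j | j) <;> rfl
  rw [hswap, det_fromBlocks_zero₁₂, Equiv.Perm.sign_sumComm] at h
  rw [mul_assoc, h]
  push_cast
  rw [← mul_assoc, ← pow_add, ← two_mul, pow_mul]
  simp

namespace LinearMap.BilinForm

section CommRing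

variable {R M ι : Type*} [CommRing R] [AddCommGroup M] [Module R M] [Fintype ι] [DecidableEq ι]

theorem toMatrix_reindex {κ : Type*} [Fintype κ] [DecidableEq κ] (B : LinearMap.BilinForm R M)
    (b : Basis ι R M) (e : ι ≃ κ) :
    toMatrix (b.reindex e) B = reindex e e (toMatrix b B) := by
  ext i j
  simp [toMatrix_apply]

theorem det_toMatrix_eq_det_toMatrix_sq_mul (B : LinearMap.BilinForm R M) (b c : Basis ι R M) :
    (toMatrix c B).det = (b.toMatrix c).det ^ 2 * (toMatrix b B).det := by
  rw [← toMatrix_mul_basis_toMatrix b c, det_mul, det_mul, det_transpose]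
  ring

end CommRing

variable {K V : Type*} [Field K] [AddCommGroup V] [Module K V] [FiniteDimensional K V]
  {B : LinearMap.BilinForm K V} {W : Submodule K V}

theorem exists_basis_toMatrix_eq_fromBlocks_zero (hB : B.IsSymm) (hW : W ≤ B.orthogonal W)
    (hdim : finrank K V = finrank K W + finrank K W) :
    ∃ (c : Basis (Fin (finrank K W) ⊕ Fin (finrank K W)) K V) (X Y : Matrix _ _ K),
      toMatrix c B = fromBlocks 0 X Xᵀ Y := by
  obtain ⟨D, hD⟩ := W.exists_isCompl
  have hDdim : finrank K D = finrank K W := by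
    have := Submodule.finrank_add_eq_of_isCompl hD
    omega
  let bW := finBasis K W
  let bD := finBasisOfFinrankEq K D hDdim
  let c := (bW.prod bD).map (Submodule.prodEquivOfIsCompl W D hD)
  refine ⟨c, of fun i j => B (bW i) (bD j), of fun i j => B (bD i) (bD j), ?_⟩
  ext (i | i) (j | j)
  · simpa [c, toMatrix_apply] using hW (bW j).2 _ (bW i).2
  · simp [c, toMatrix_apply]
  · simpa [c, toMatrix_apply] using hB.eq (bD i) (bW j)
  · simp [c, toMatrix_apply]

theorem isSquare_neg_one_pow_mul_det_toMatrix (hB : B.IsSymm) (hW : W ≤ B.orthogonal W)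
    (hdim : finrank K V = finrank K W + finrank K W)
    {ι : Type*} [Fintype ι] [DecidableEq ι] (b : Basis ι K V) :
    IsSquare ((-1) ^ finrank K W * (toMatrix b B).det) := by
  obtain ⟨c, X, Y, hc⟩ := exists_basis_toMatrix_eq_fromBlocks_zero hB hW hdim
  have hcard : Fintype.card (Fin (finrank K W) ⊕ Fin (finrank K W)) = Fintype.card ι := by
    simp [← finrank_eq_card_basis b, hdim]
  let c' := c.reindex (Fintype.equivOfCardEq hcard)
  have hc' : (toMatrix c' B).det = (-1) ^ finrank K W * X.det ^ 2 := by
    rw [toMatrix_reindex, det_reindex_self, hc, Matrix.det_fromBlocks_zero₁₁, det_transpose,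
      Fintype.card_fin, mul_assoc, sq]
  rw [det_toMatrix_eq_det_toMatrix_sq_mul B b c'] at hc'
  have hP : (b.toMatrix c').det ≠ 0 := by
    rw [← b.det_apply]
    exact (b.isUnit_det c').ne_zero
  have hsign : ((-1 : K) ^ finrank K W) ^ 2 = 1 := by
    rw [← pow_mul, mul_comm, pow_mul, neg_one_sq, one_pow]
  refine ⟨X.det / (b.toMatrix c').det, ?_⟩
  field_simp
  linear_combination (-1) ^ finrank K W * hc' + X.det ^ 2 * hsign

end LinearMap.BilinForm

open LinearMap.BilinForm

theorem dualCode_eq_orthogonal {F : Type*} [Field F] {n : ℕ} (C : Submodule F (Fin n → F)) :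
    dualCode C = (toBilin' (1 : Matrix (Fin n) (Fin n) F)).orthogonal C := by
  ext y
  simp only [mem_orthogonal_iff, toBilin'_apply', one_mulVec, dotProduct]
  rfl

/-- The length of a ternary self-dual code is divisible by 4. -/
theorem typeIII_length_div_four {n : ℕ} (C : Submodule (ZMod 3) (Fin n → ZMod 3))
    (h : C = dualCode C) : 4 ∣ n := by
  let B := toBilin' (1 : Matrix (Fin n) (Fin n) (ZMod 3))
  have hC : C = B.orthogonal C := h.trans (dualCode_eq_orthogonal C)
  have hdim : finrank (ZMod 3) (Fin n → ZMod 3) = finrank (ZMod 3) C + finrank (ZMod 3) C := by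
    have hB : B.Nondegenerate :=
      nondegenerate_toBilin'_iff.mpr (nondegenerate_of_det_ne_zero (by simp))
    have := finrank_orthogonal hB C
    rw [← hC] at this
    have := C.finrank_le
    omega
  have hsq := isSquare_neg_one_pow_mul_det_toMatrix (isSymm_toBilin'_iff_isSymm.mpr isSymm_one)
    hC.le hdim (Pi.basisFun _ _)
  rw [toMatrix_basisFun, toMatrix'_toBilin', det_one, mul_one] at hsq
  have hk : Even (finrank (ZMod 3) C) := by
    by_contra hodd
    rw [Nat.not_even_iff_odd.mp hodd |>.neg_one_pow] at hsq
    exact (by decide : ¬ IsSquare (-1 : ZMod 3)) hsq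
  obtain ⟨m, hm⟩ := hk
  rw [Module.finrank_fin_fun] at hdim
  exact ⟨m, by omega⟩
end

section
/- If C is a binary self-dual code in which every codeword has weight divisible by 4 (Type II), then 8 divides the length n. -/
open scoped BigOperators

noncomputable section TypeIIAux

open Finset Complex

/-- The character `a ↦ (-1)^a` on `ZMod 2`, valued in `ℂ`. -/
private def chi (a : ZMod 2) : ℂ := (-1 : ℂ) ^ a.val

private lemma zmod2_cases : ∀ a : ZMod 2, a = 0 ∨ a = 1 := by decide

private lemma zmod2_self_add : ∀ a : ZMod 2, a + a = 0 := by decide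

private lemma chi_zero : chi 0 = 1 := by simp [chi]

private lemma chi_one : chi 1 = -1 := by
  have : (1 : ZMod 2).val = 1 := by decide
  simp [chi, this]

private lemma chi_add (a b : ZMod 2) : chi (a + b) = chi a * chi b := by
  have h11 : (1 + 1 : ZMod 2) = 0 := by decide
  rcases zmod2_cases a with rfl | rfl <;> rcases zmod2_cases b with rfl | rfl <;>
    simp [chi_zero, chi_one, h11]

private lemma chi_sum {ι : Type*} (s : Finset ι) (f : ι → ZMod 2) :
    chi (∑ j ∈ s, f j) = ∏ j ∈ s, chi (f j) := by
  classical
  induction s using Finset.cons_induction with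
  | empty => simp [chi_zero]
  | cons a s ha ih => rw [Finset.sum_cons, Finset.prod_cons, chi_add, ih]

private lemma wt_le {n : ℕ} (v : Fin n → ZMod 2) : wt v ≤ n := by
  simpa [wt] using (Finset.card_filter_le Finset.univ fun i => v i ≠ 0)

/-- Character sum expansion over all of `F_2^n`. -/
private lemma innerCharSum {n : ℕ} (v : Fin n → ZMod 2) :
    ∑ u : Fin n → ZMod 2, (Complex.I ^ wt u * chi (∑ j, u j * v j))
      = (1 - Complex.I) ^ wt v * (1 + Complex.I) ^ (n - wt v) := by
  classical
  have step1 : ∀ u : Fin n → ZMod 2, Complex.I ^ wt u * chi (∑ j, u j * v j)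
      = ∏ j, ((if u j ≠ 0 then Complex.I else 1) * chi (u j * v j)) := by
    intro u
    rw [Finset.prod_mul_distrib, ← chi_sum]
    congr 1
    rw [Finset.prod_ite, Finset.prod_const, Finset.prod_const_one, mul_one, wt]
  simp_rw [step1]
  rw [← Fintype.prod_sum (κ := fun _ : Fin n => ZMod 2)
    (f := fun j a => (if a ≠ 0 then Complex.I else 1) * chi (a * v j))]
  have huniv : (Finset.univ : Finset (ZMod 2)) = {0, 1} := by decide
  have hfac : ∀ j : Fin n,
      (∑ a : ZMod 2, (if a ≠ 0 then Complex.I else 1) * chi (a * v j))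
        = if v j ≠ 0 then 1 - Complex.I else 1 + Complex.I := by
    intro j
    rw [huniv]
    rw [Finset.sum_insert (by decide), Finset.sum_singleton]
    have h0 : ((0 : ZMod 2) * v j) = 0 := by ring
    have h1 : ((1 : ZMod 2) * v j) = v j := by ring
    rcases zmod2_cases (v j) with hv | hv <;>
      simp [hv, h0, h1, chi_zero, chi_one] <;> ring
  simp_rw [hfac]
  rw [Finset.prod_ite, Finset.prod_const, Finset.prod_const, wt]
  have hcard := Finset.card_filter_add_card_filter_not
    (s := (Finset.univ : Finset (Fin n))) (p := fun i => v i ≠ 0)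
  simp only [Finset.card_univ, Fintype.card_fin] at hcard
  congr 2
  omega

/-- The length of a binary Type II (doubly even self-dual) code is divisible by 8. -/
theorem typeII_length_div_eight {n : ℕ} (C : Submodule (ZMod 2) (Fin n → ZMod 2))
    (h : C = dualCode C) (hw : ∀ v ∈ C, 4 ∣ wt v) : 8 ∣ n := by
  classical
  set CF : Finset (Fin n → ZMod 2) := Finset.univ.filter (· ∈ C) with hCF
  have memCF : ∀ x, x ∈ CF ↔ x ∈ C := by
    intro x; simp [hCF]
  set c : ℂ := (CF.card : ℂ) with hc
  -- orthogonality
  have orth : ∀ u : Fin n → ZMod 2,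
      (∑ v ∈ CF, chi (∑ j, u j * v j)) = if u ∈ C then c else 0 := by
    intro u
    by_cases hu : u ∈ C
    · have : ∀ v ∈ CF, chi (∑ j, u j * v j) = 1 := by
        intro v hv
        have hvC : v ∈ C := (memCF v).1 hv
        have huD : u ∈ dualCode C := h ▸ hu
        have := huD v hvC
        have hz : (∑ j, u j * v j) = 0 := by
          rw [← this]; exact Finset.sum_congr rfl fun j _ => mul_comm _ _
        rw [hz, chi_zero]
      rw [Finset.sum_congr rfl this, Finset.sum_const, if_pos hu, hc]
      simp
    · rw [if_neg hu]
      have hu' : u ∉ dualCode C := h ▸ hu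
      have : ∃ x ∈ C, (∑ j, x j * u j) ≠ 0 := by
        by_contra hcon
        push_neg at hcon
        exact hu' hcon
      obtain ⟨x, hxC, hx⟩ := this
      have hx1 : (∑ j, u j * x j) = 1 := by
        have : (∑ j, u j * x j) = ∑ j, x j * u j :=
          Finset.sum_congr rfl fun j _ => mul_comm _ _
        rw [this]
        rcases zmod2_cases (∑ j, x j * u j) with h0 | h1
        · exact absurd h0 hx
        · exact h1
      have hxx : x + x = 0 := by
        ext j; exact zmod2_self_add (x j)
      have himg : CF = CF.image (fun v => v + x) := by
        ext v
        simp only [Finset.mem_image, memCF]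
        constructor
        · intro hv
          refine ⟨v + x, C.add_mem hv hxC, ?_⟩
          rw [add_assoc, hxx, add_zero]
        · rintro ⟨w, hw', rfl⟩
          exact C.add_mem hw' hxC
      have key : (∑ v ∈ CF, chi (∑ j, u j * v j))
          = - ∑ v ∈ CF, chi (∑ j, u j * v j) := by
        nth_rewrite 1 [himg]
        rw [Finset.sum_image (fun a _ b _ hab => by
          have := congrArg (fun y => y + x) hab
          simpa [add_assoc, hxx] using this)]
        rw [← Finset.sum_neg_distrib]
        refine Finset.sum_congr rfl fun v hv => ?_
        have hsplit : (∑ j, u j * (v + x) j) = (∑ j, u j * v j) + ∑ j, u j * x j := by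
          rw [← Finset.sum_add_distrib]
          exact Finset.sum_congr rfl fun j _ => by simp [Pi.add_apply, mul_add]
        rw [hsplit, chi_add, hx1, chi_one]
        ring
      have h2 : (2 : ℂ) * ∑ v ∈ CF, chi (∑ j, u j * v j) = 0 := by
        linear_combination key
      have := mul_eq_zero.mp h2
      simpa using this
  -- evaluate the double sum both ways
  have hDvu : ∑ v ∈ CF, ∑ u : Fin n → ZMod 2, Complex.I ^ wt u * chi (∑ j, u j * v j)
      = c * (1 + Complex.I) ^ n := by
    have hv1 : ∀ v ∈ CF, (∑ u : Fin n → ZMod 2, Complex.I ^ wt u * chi (∑ j, u j * v j))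
        = (1 + Complex.I) ^ n := by
      intro v hv
      rw [innerCharSum]
      obtain ⟨m, hm⟩ := hw v ((memCF v).1 hv)
      have h1mi : (1 - Complex.I) = (1 + Complex.I) * (-Complex.I) := by
        linear_combination Complex.I_sq
      have hnegI : ((-Complex.I)) ^ wt v = 1 := by
        rw [hm, pow_mul, show (-Complex.I) ^ 4 = Complex.I ^ 4 from by ring,
          Complex.I_pow_four, one_pow]
      rw [h1mi, mul_pow, hnegI, mul_one, ← pow_add]
      congr 1
      have := wt_le v
      omega
    rw [Finset.sum_congr rfl hv1, Finset.sum_const, nsmul_eq_mul, hc]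
  have hDuv : ∑ v ∈ CF, ∑ u : Fin n → ZMod 2, Complex.I ^ wt u * chi (∑ j, u j * v j)
      = c * c := by
    rw [Finset.sum_comm]
    have hu1 : ∀ u : Fin n → ZMod 2, (∑ v ∈ CF, Complex.I ^ wt u * chi (∑ j, u j * v j))
        = if u ∈ CF then c else 0 := by
      intro u
      rw [← Finset.mul_sum, orth u]
      by_cases hu : u ∈ C
      · rw [if_pos hu, if_pos ((memCF u).2 hu)]
        obtain ⟨m, hm⟩ := hw u hu
        rw [hm, pow_mul, Complex.I_pow_four, one_pow, one_mul]
      · rw [if_neg hu, if_neg (fun hc' => hu ((memCF u).1 hc')), mul_zero]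
    rw [Finset.sum_congr rfl (fun u _ => hu1 u), Finset.sum_ite_mem, Finset.univ_inter,
      Finset.sum_const, nsmul_eq_mul, hc]
  have hcpos : 0 < CF.card := Finset.card_pos.2 ⟨0, (memCF 0).2 C.zero_mem⟩
  have hc0 : c ≠ 0 := by
    rw [hc]
    exact Nat.cast_ne_zero.2 hcpos.ne'
  have hkey : (1 + Complex.I) ^ n = c := mul_left_cancel₀ hc0 (hDvu.symm.trans hDuv)
  -- endgame: (1+I)^n is a positive real, so 8 ∣ n
  have h8 : (1 + Complex.I) ^ 8 = 16 := by
    have h2' : (1 + Complex.I) ^ 2 = 2 * Complex.I := by linear_combination Complex.I_sq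
    calc (1 + Complex.I) ^ 8 = ((1 + Complex.I) ^ 2) ^ 4 := by ring
    _ = (2 * Complex.I) ^ 4 := by rw [h2']
    _ = 16 * Complex.I ^ 4 := by ring
    _ = 16 := by rw [Complex.I_pow_four, mul_one]
  set k := n / 8 with hk
  set r := n % 8 with hrdef
  have hr8 : r < 8 := Nat.mod_lt _ (by norm_num)
  have hn : n = 8 * k + r := by omega
  have hsplit : (((16 : ℝ) ^ k : ℝ) : ℂ) * (1 + Complex.I) ^ r = ((CF.card : ℝ) : ℂ) := by
    push_cast
    rw [show ((16 : ℂ)) ^ k = ((1 + Complex.I) ^ 8) ^ k from by rw [h8], ← pow_mul, ← pow_add,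
      ← hn, hkey, hc]
  have hpos : (0 : ℝ) < (16 : ℝ) ^ k := by positivity
  have hcardpos : (0 : ℝ) < (CF.card : ℝ) := by exact_mod_cast hcpos
  interval_cases r
  · exact ⟨k, by omega⟩
  all_goals {
    exfalso
    have him := congrArg Complex.im hsplit
    have hre := congrArg Complex.re hsplit
    simp only [pow_succ, pow_zero, one_mul, Complex.mul_im, Complex.mul_re,
      Complex.ofReal_re, Complex.ofReal_im, Complex.add_re, Complex.add_im,
      Complex.one_re, Complex.one_im, Complex.I_re, Complex.I_im] at him hre
    nlinarith [hpos, hcardpos, him, hre]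
  }

end TypeIIAux
end

section
/- The polynomials f = X^4 + 8XY^3 and g = Y^3(X^3 − Y^3)^3 are algebraically independent over ℂ. -/
open MvPolynomial Matrix

/-! Jacobian criterion. If `Q(f, g) = 0` with `Q ≠ 0` of minimal total degree, the chain rule
gives `(∂₀Q(f, g), ∂₁Q(f, g)) · J = 0` for the Jacobian matrix `J` of `(f, g)`. As `det J ≠ 0`,
every `∂ᵢQ(f, g)` vanishes, so by minimality every `∂ᵢQ` vanishes; in characteristic zero this
makes `Q` a constant, which must then be `0`. -/

namespace MvPolynomial

variable {R σ τ : Type*}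

theorem pderiv_aeval [CommSemiring R] [Fintype σ] (v : σ → MvPolynomial τ R)
    (p : MvPolynomial σ R) (i : τ) :
    pderiv i (aeval v p) = ∑ j, aeval v (pderiv j p) * pderiv i (v j) := by
  classical
  induction p using MvPolynomial.induction_on with
  | C a => simp
  | add p q hp hq => simp only [map_add, hp, hq, add_mul, Finset.sum_add_distrib]
  | mul_X p k hp =>
    simp only [map_mul, aeval_X, Derivation.leibniz, hp, smul_eq_mul, pderiv_X, map_add,
      add_mul, Finset.sum_add_distrib, Finset.mul_sum, Pi.single_apply, mul_ite, mul_one,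
      mul_zero, apply_ite (aeval v), map_zero, ite_mul, zero_mul, Finset.sum_ite_eq,
      Finset.mem_univ, if_true, mul_assoc]

theorem totalDegree_pderiv_lt [CommSemiring R] {p : MvPolynomial σ R} (hp : 0 < p.totalDegree)
    (i : σ) : (pderiv i p).totalDegree < p.totalDegree := by
  rw [totalDegree, Finset.sup_lt_iff (by exact_mod_cast hp)]
  intro m hm
  have hm' : m + Finsupp.single i 1 ∈ p.support := by
    rw [mem_support_iff, coeff_pderiv] at hm
    exact mem_support_iff.mpr (left_ne_zero_of_mul hm)
  calc (m.sum fun _ e => e) < (m + Finsupp.single i 1).sum fun _ e => e := by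
        rw [Finsupp.sum_add_index' (fun _ => rfl) (fun _ _ _ => rfl)]; simp
    _ ≤ p.totalDegree := le_totalDegree hm'

theorem eq_C_of_forall_pderiv_eq_zero [CommRing R] [IsAddTorsionFree R] {p : MvPolynomial σ R}
    (h : ∀ i, pderiv i p = 0) : p = C (coeff 0 p) := by
  classical
  ext m
  rw [coeff_C]
  split_ifs with hm
  · rw [hm]
  obtain ⟨i, hi : m i ≠ 0⟩ := Finsupp.ne_iff.mp (Ne.symm hm)
  have hle : Finsupp.single i 1 ≤ m := Finsupp.single_le_iff.mpr (Nat.one_le_iff_ne_zero.mpr hi)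
  have e := congr(coeff (m - Finsupp.single i 1) $(h i))
  rw [coeff_pderiv, coeff_zero, tsub_add_cancel_of_le hle, mul_comm, ← Nat.cast_succ,
    ← nsmul_eq_mul] at e
  exact (smul_eq_zero.mp e).resolve_left (Nat.succ_ne_zero _)

noncomputable def jacobian [CommSemiring R] (v : σ → MvPolynomial τ R) :
    Matrix σ τ (MvPolynomial τ R) :=
  Matrix.of fun i j => pderiv j (v i)

theorem vecMul_jacobian [CommSemiring R] [Fintype σ] (v : σ → MvPolynomial τ R)
    (p : MvPolynomial σ R) : (fun j => aeval v (pderiv j p)) ᵥ* jacobian v =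
      fun i => pderiv i (aeval v p) := by
  ext1 i
  simp only [vecMul, dotProduct, jacobian, of_apply, pderiv_aeval]

theorem aeval_pderiv_eq_zero_of_det_jacobian_ne_zero [CommRing R] [IsDomain R] [Fintype σ]
    [DecidableEq σ] {v : σ → MvPolynomial σ R} (hv : (jacobian v).det ≠ 0) {p : MvPolynomial σ R}
    (hp : aeval v p = 0) (j : σ) : aeval v (pderiv j p) = 0 :=
  congr_fun (eq_zero_of_vecMul_eq_zero hv (by rw [vecMul_jacobian, hp]; ext1; exact map_zero _)) j

theorem algebraicIndependent_of_det_jacobian_ne_zero [CommRing R] [IsDomain R] [CharZero R]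
    [Fintype σ] [DecidableEq σ] {v : σ → MvPolynomial σ R} (hv : (jacobian v).det ≠ 0) :
    AlgebraicIndependent R v := by
  rw [algebraicIndependent_iff]
  intro p hp
  induction hn : p.totalDegree using Nat.strong_induction_on generalizing p with
  | _ n ih =>
    have hC : p = C (coeff 0 p) := by
      rcases Nat.eq_zero_or_pos n with h0 | hpos
      · exact totalDegree_eq_zero_iff_eq_C.mp (hn.trans h0)
      refine eq_C_of_forall_pderiv_eq_zero fun j => ih _ ?_ _
        (aeval_pderiv_eq_zero_of_det_jacobian_ne_zero hv hp j) rfl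
      exact hn ▸ totalDegree_pderiv_lt (hn ▸ hpos) j
    rw [hC, aeval_C, algebraMap_eq, C_eq_zero] at hp
    rw [hC, hp, C_0]

end MvPolynomial

/-- The Gleason generators `f = X^4 + 8XY^3` and `g = Y^3 (X^3 - Y^3)^3` for
Type III weight enumerators are algebraically independent over ℂ. -/
theorem typeIII_gleason_algebraicIndependent :
    AlgebraicIndependent ℂ
      ![(X 0 : MvPolynomial (Fin 2) ℂ) ^ 4 + 8 * X 0 * X 1 ^ 3,
        (X 1 : MvPolynomial (Fin 2) ℂ) ^ 3 * (X 0 ^ 3 - X 1 ^ 3) ^ 3] := by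
  refine algebraicIndependent_of_det_jacobian_ne_zero fun h => ?_
  -- the determinant is `12 Y²(X³ - Y³)²(X⁶ - 20X³Y³ - 8Y⁶)`, which is nonzero at `(2, 1)`
  have h8 (i : Fin 2) : pderiv i (8 : MvPolynomial (Fin 2) ℂ) = 0 := (pderiv i).map_natCast 8
  have hdet := congr_arg (eval ![2, 1]) h
  norm_num [jacobian, det_fin_two, pderiv_X, h8] at hdet
end

section
/- The polynomials f = X^2 + Y^2 and g = X^2 Y^2 (X^2 − Y^2)^2 are algebraically independent over ℂ. -/
open MvPolynomial

namespace TypeIGleasonAux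

noncomputable def hfam : Fin 2 → Polynomial (Polynomial ℂ) :=
  ![Polynomial.C (Polynomial.X ^ 2 + 1) * Polynomial.X ^ 2,
    Polynomial.C (Polynomial.X ^ 2 * (Polynomial.X ^ 2 - 1) ^ 2) * Polynomial.X ^ 8]

noncomputable def Q (m : Fin 2 →₀ ℕ) : Polynomial ℂ :=
  (Polynomial.X ^ 2 + 1) ^ (m 0) * (Polynomial.X ^ 2 * (Polynomial.X ^ 2 - 1) ^ 2) ^ (m 1)

lemma monic_base1 : (Polynomial.X ^ 2 + 1 : Polynomial ℂ).Monic := by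
  simpa using Polynomial.monic_X_pow_add_C (a := (1 : ℂ)) (n := 2) two_ne_zero

lemma monic_base2 :
    (Polynomial.X ^ 2 * (Polynomial.X ^ 2 - 1) ^ 2 : Polynomial ℂ).Monic := by
  have h1 : (Polynomial.X ^ 2 - 1 : Polynomial ℂ).Monic := by
    simpa using Polynomial.monic_X_pow_sub_C (a := (1 : ℂ)) (n := 2) two_ne_zero
  exact (Polynomial.monic_X_pow 2).mul (h1.pow 2)

lemma Q_monic (m : Fin 2 →₀ ℕ) : (Q m).Monic :=
  (monic_base1.pow _).mul (monic_base2.pow _)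

lemma natDegree_base1 : (Polynomial.X ^ 2 + 1 : Polynomial ℂ).natDegree = 2 := by
  compute_degree!

lemma natDegree_base2 :
    (Polynomial.X ^ 2 * (Polynomial.X ^ 2 - 1) ^ 2 : Polynomial ℂ).natDegree = 6 := by
  compute_degree!

lemma Q_natDegree (m : Fin 2 →₀ ℕ) : (Q m).natDegree = 2 * m 0 + 6 * m 1 := by
  rw [Q, (monic_base1.pow _).natDegree_mul (monic_base2.pow _),
    monic_base1.natDegree_pow, monic_base2.natDegree_pow, natDegree_base1, natDegree_base2]
  ring

lemma aeval_hfam_monomial (m : Fin 2 →₀ ℕ) (c : ℂ) :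
    aeval hfam (monomial m c) =
      Polynomial.C (Polynomial.C c * Q m) * Polynomial.X ^ (2 * m 0 + 8 * m 1) := by
  rw [aeval_monomial, Finsupp.prod_pow, Fin.prod_univ_two]
  have halg : algebraMap ℂ (Polynomial (Polynomial ℂ)) c = Polynomial.C (Polynomial.C c) := by
    rw [Polynomial.algebraMap_apply, Polynomial.algebraMap_apply]
    simp
  rw [halg, hfam, Q]
  simp only [Matrix.cons_val_zero, Matrix.cons_val_one, Matrix.head_cons]
  rw [mul_pow, mul_pow, ← Polynomial.C_pow, ← Polynomial.C_pow, ← pow_mul, ← pow_mul]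
  rw [pow_add, Polynomial.C_mul, Polynomial.C_mul]
  ring

lemma aeval_hfam_injective (p : MvPolynomial (Fin 2) ℂ) (hp : aeval hfam p = 0) : p = 0 := by
  by_contra hne
  have hS : p.support.Nonempty := support_nonempty.mpr hne
  obtain ⟨m₀, hm₀⟩ := hS
  set d : (Fin 2 →₀ ℕ) → ℕ := fun m => 2 * m 0 + 8 * m 1 with hd
  set v : ℕ := d m₀ with hv
  set T : Finset (Fin 2 →₀ ℕ) := p.support.filter (fun m => d m = v) with hT
  have hTne : T.Nonempty := ⟨m₀, Finset.mem_filter.mpr ⟨hm₀, rfl⟩⟩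
  obtain ⟨ms, hmsT, hmin⟩ := T.exists_min_image (fun m => m 1) hTne
  have hmsS : ms ∈ p.support := (Finset.mem_filter.mp hmsT).1
  have hmsv : d ms = v := (Finset.mem_filter.mp hmsT).2
  set u : ℕ := 2 * ms 0 + 6 * ms 1 with hu
  -- expand aeval hfam p as a sum
  have hsum : aeval hfam p =
      ∑ m ∈ p.support, Polynomial.C (Polynomial.C (p.coeff m) * Q m) * Polynomial.X ^ (d m) := by
    conv_lhs => rw [← p.support_sum_monomial_coeff]
    rw [map_sum]
    exact Finset.sum_congr rfl fun m _ => aeval_hfam_monomial m _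
  have h0 : (((aeval hfam p).coeff v).coeff u) = 0 := by rw [hp]; simp
  rw [hsum] at h0
  rw [Polynomial.finset_sum_coeff, Polynomial.finset_sum_coeff] at h0
  have hcoeff : ∀ m ∈ p.support,
      ((Polynomial.C (Polynomial.C (p.coeff m) * Q m) * Polynomial.X ^ (d m)).coeff v).coeff u =
      if d m = v then (p.coeff m) * (Q m).coeff u else 0 := by
    intro m _
    rw [Polynomial.C_mul_X_pow_eq_monomial, Polynomial.coeff_monomial]
    split_ifs with h
    · rw [Polynomial.coeff_C_mul]
    · simp
  rw [Finset.sum_congr rfl hcoeff] at h0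
  rw [Finset.sum_eq_single ms] at h0
  · rw [if_pos hmsv] at h0
    have hdeg : (Q ms).natDegree = u := by rw [Q_natDegree]
    have hc1 : (Q ms).coeff u = 1 := by
      rw [← hdeg]; exact (Q_monic ms).coeff_natDegree
    rw [hc1, mul_one] at h0
    exact (mem_support_iff.mp hmsS) h0
  · intro m hmS hne'
    by_cases hdm : d m = v
    · rw [if_pos hdm]
      have hmT : m ∈ T := Finset.mem_filter.mpr ⟨hmS, hdm⟩
      have hb : ms 1 ≤ m 1 := hmin m hmT
      have hbne : ms 1 ≠ m 1 := by
        intro he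
        apply hne'
        have h2 : d m = d ms := by rw [hdm, hmsv]
        have h02 : m 0 = ms 0 := by simp only [hd] at h2; omega
        ext i
        match i with
        | 0 => exact h02
        | 1 => exact he.symm
      have hlt : (Q m).natDegree < u := by
        have h2 : d m = d ms := by rw [hdm, hmsv]
        rw [Q_natDegree]
        simp only [hd] at h2
        have : ms 1 < m 1 := lt_of_le_of_ne hb hbne
        omega
      rw [Polynomial.coeff_eq_zero_of_natDegree_lt hlt, mul_zero]
    · rw [if_neg hdm]
  · intro h; exact absurd hmsS h

lemma hfam_algIndep : AlgebraicIndependent ℂ hfam := by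
  rw [algebraicIndependent_iff_injective_aeval]
  exact (injective_iff_map_eq_zero _).mpr aeval_hfam_injective

end TypeIGleasonAux

/-- The Gleason generators `f = X^2 + Y^2` and `g = X^2 Y^2 (X^2 - Y^2)^2` for
Type I weight enumerators are algebraically independent over ℂ. -/
theorem typeI_gleason_algebraicIndependent :
    AlgebraicIndependent ℂ
      ![(X 0 : MvPolynomial (Fin 2) ℂ) ^ 2 + X 1 ^ 2,
        (X 0 : MvPolynomial (Fin 2) ℂ) ^ 2 * X 1 ^ 2 * (X 0 ^ 2 - X 1 ^ 2) ^ 2] := by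
  classical
  set σ : MvPolynomial (Fin 2) ℂ →ₐ[ℂ] Polynomial (Polynomial ℂ) :=
    aeval ![Polynomial.C Polynomial.X * Polynomial.X, Polynomial.X] with hσ
  apply AlgebraicIndependent.of_comp σ
  have hcomp : σ ∘ ![(X 0 : MvPolynomial (Fin 2) ℂ) ^ 2 + X 1 ^ 2,
      (X 0 : MvPolynomial (Fin 2) ℂ) ^ 2 * X 1 ^ 2 * (X 0 ^ 2 - X 1 ^ 2) ^ 2] =
      TypeIGleasonAux.hfam := by
    funext i
    fin_cases i
    · show σ ((X 0 : MvPolynomial (Fin 2) ℂ) ^ 2 + X 1 ^ 2) =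
        Polynomial.C (Polynomial.X ^ 2 + 1) * Polynomial.X ^ 2
      simp only [hσ, map_add, map_pow, aeval_X, Matrix.cons_val_zero, Matrix.cons_val_one,
        Matrix.head_cons, Polynomial.C_add, Polynomial.C_pow, Polynomial.C_1]
      ring
    · show σ ((X 0 : MvPolynomial (Fin 2) ℂ) ^ 2 * X 1 ^ 2 * (X 0 ^ 2 - X 1 ^ 2) ^ 2) =
        Polynomial.C (Polynomial.X ^ 2 * (Polynomial.X ^ 2 - 1) ^ 2) * Polynomial.X ^ 8
      simp only [hσ, map_add, map_mul, map_sub, map_pow, aeval_X, Matrix.cons_val_zero,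
        Matrix.cons_val_one, Matrix.head_cons, Polynomial.C_add, Polynomial.C_mul,
        Polynomial.C_pow, Polynomial.C_sub, Polynomial.C_1]
      ring
  rw [hcomp]
  exact TypeIGleasonAux.hfam_algIndep
end

section
/- For each n divisible by 4, writing j = n/4 and m = ⌊j/3⌋, there exist unique complex numbers a_0, …, a_m such that the polynomial Σ_{i=0}^m a_i f^{j−3i} g^i, with f = X^4+8XY^3 and g = Y^3(X^3−Y^3)^3, has the form X^n + Σ_{i=m+1}^{n/3} A*_{3i} X^{n−3i} Y^{3i}. -/
/-!
Every term `f^(j-3k) g^k` is a binary form of degree `n = 4j`, and the coefficient of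
`X^(n-d) Y^d` in such a form is the coefficient of `T^d` in its dehomogenisation `p(1, T)`.
Since `f(1, T) = 1 + 8T³` and `g(1, T) = T³(1 - T³)³`, the dehomogenisation of `f^(j-3k) g^k`
is `T^(3k)` times a polynomial with constant term `1`. Hence the `m + 1` prescribed coefficients
of `∑ aₖ f^(j-3k) g^k` depend on `a` through a lower unitriangular matrix, and the system has
exactly one solution.
-/

open MvPolynomial

section Dehomogenize

variable {R : Type*} [CommRing R]

noncomputable def dehomogenize : MvPolynomial (Fin 2) R →ₐ[R] Polynomial R :=
  aeval ![1, Polynomial.X]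

theorem dehomogenize_eq_sum (p : MvPolynomial (Fin 2) R) :
    dehomogenize p = ∑ μ ∈ p.support, Polynomial.C (p.coeff μ) * Polynomial.X ^ μ 1 := by
  rw [dehomogenize, aeval_def, eval₂_eq']
  refine Finset.sum_congr rfl fun μ _ => ?_
  simp [Fin.prod_univ_two]

theorem MvPolynomial.IsHomogeneous.coeff_eq_coeff_dehomogenize {p : MvPolynomial (Fin 2) R}
    {N d : ℕ} (hp : p.IsHomogeneous N) (hd : d ≤ N) :
    p.coeff (Finsupp.single 0 (N - d) + Finsupp.single 1 d) = (dehomogenize p).coeff d := by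
  set ν : Fin 2 →₀ ℕ := Finsupp.single 0 (N - d) + Finsupp.single 1 d
  have hν : ∀ μ ∈ p.support, μ 1 = d → μ = ν := by
    intro μ hμ h1
    have hdeg : μ 0 + μ 1 = N := by
      by_contra h
      refine mem_support_iff.mp hμ (hp.coeff_eq_zero ?_)
      rwa [Finsupp.degree_eq_sum, Fin.sum_univ_two]
    ext t
    subst h1 hdeg
    fin_cases t <;> simp [ν]
  rw [dehomogenize_eq_sum, Polynomial.finsetSum_coeff]
  simp only [Polynomial.coeff_C_mul, Polynomial.coeff_X_pow]
  rw [Finset.sum_eq_single ν]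
  · simp [ν]
  · intro μ hμ hμν
    rw [if_neg fun h => hμν (hν μ hμ h.symm), mul_zero]
  · intro h
    simp [notMem_support_iff.mp h]

end Dehomogenize

section Gleason

variable {R : Type*} [CommRing R]

noncomputable def gleasonF : MvPolynomial (Fin 2) R := X 0 ^ 4 + 8 * X 0 * X 1 ^ 3

noncomputable def gleasonG : MvPolynomial (Fin 2) R := X 1 ^ 3 * (X 0 ^ 3 - X 1 ^ 3) ^ 3

theorem isHomogeneous_gleasonF : (gleasonF : MvPolynomial (Fin 2) R).IsHomogeneous 4 := by
  have hX (i : Fin 2) := isHomogeneous_X R i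
  rw [gleasonF, ← map_ofNat C 8]
  exact ((hX 0).pow 4).add (((hX 0).C_mul 8).mul ((hX 1).pow 3))

theorem isHomogeneous_gleasonG : (gleasonG : MvPolynomial (Fin 2) R).IsHomogeneous 12 :=
  have hX (i : Fin 2) := isHomogeneous_X R i
  ((hX 1).pow 3).mul ((((hX 0).pow 3).sub ((hX 1).pow 3)).pow 3)

theorem dehomogenize_gleasonF :
    dehomogenize (gleasonF : MvPolynomial (Fin 2) R) = 1 + 8 * Polynomial.X ^ 3 := by
  simp [gleasonF, dehomogenize]

theorem dehomogenize_gleasonG :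
    dehomogenize (gleasonG : MvPolynomial (Fin 2) R) =
      Polynomial.X ^ 3 * (1 - Polynomial.X ^ 3) ^ 3 := by
  simp [gleasonG, dehomogenize]

theorem isHomogeneous_gleasonF_pow_mul_gleasonG_pow {j k : ℕ} (hk : 3 * k ≤ j) :
    ((gleasonF : MvPolynomial (Fin 2) R) ^ (j - 3 * k) * gleasonG ^ k).IsHomogeneous (4 * j) := by
  convert (isHomogeneous_gleasonF.pow (j - 3 * k)).mul (isHomogeneous_gleasonG.pow k) using 1
  omega

theorem dehomogenize_gleasonF_pow_mul_gleasonG_pow (j k : ℕ) :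
    dehomogenize ((gleasonF : MvPolynomial (Fin 2) R) ^ (j - 3 * k) * gleasonG ^ k) =
      Polynomial.X ^ (3 * k) *
        ((1 + 8 * Polynomial.X ^ 3) ^ (j - 3 * k) * (1 - Polynomial.X ^ 3) ^ (3 * k)) := by
  rw [map_mul, map_pow, map_pow, dehomogenize_gleasonF, dehomogenize_gleasonG, mul_pow,
    ← pow_mul, ← pow_mul]
  ring

theorem coeff_dehomogenize_gleasonF_pow_mul_gleasonG_pow_of_lt {j k i : ℕ} (h : i < k) :
    (dehomogenize ((gleasonF : MvPolynomial (Fin 2) R) ^ (j - 3 * k) * gleasonG ^ k)).coeff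
      (3 * i) = 0 := by
  rw [dehomogenize_gleasonF_pow_mul_gleasonG_pow, Polynomial.coeff_X_pow_mul',
    if_neg (by omega)]

theorem coeff_dehomogenize_gleasonF_pow_mul_gleasonG_pow_self (j k : ℕ) :
    (dehomogenize ((gleasonF : MvPolynomial (Fin 2) R) ^ (j - 3 * k) * gleasonG ^ k)).coeff
      (3 * k) = 1 := by
  rw [dehomogenize_gleasonF_pow_mul_gleasonG_pow, Polynomial.coeff_X_pow_mul', if_pos le_rfl,
    Nat.sub_self, Polynomial.coeff_zero_eq_eval_zero]
  simp

end Gleason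

theorem Fin.eq_pi_single_zero_iff {M : Type*} [Zero M] {m : ℕ} (v : Fin (m + 1) → M)
    (c : M) : v = Pi.single 0 c ↔
      v 0 = c ∧ ∀ i : ℕ, 1 ≤ i → (hi : i ≤ m) → v ⟨i, Nat.lt_succ_of_le hi⟩ = 0 := by
  constructor
  · rintro rfl
    refine ⟨Pi.single_eq_same _ _, fun i hi _ => Pi.single_eq_of_ne ?_ _⟩
    rw [ne_eq, Fin.ext_iff]
    exact Nat.one_le_iff_ne_zero.mp hi
  · rintro ⟨h0, h⟩
    funext ⟨i, hi⟩
    rcases i with _ | i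
    · simpa using h0
    · rw [h (i + 1) (by omega) (by omega), Pi.single_eq_of_ne (by simp [Fin.ext_iff])]

section Extremal

open scoped Matrix

variable {R : Type*} [CommRing R] {j m : ℕ}

noncomputable def gleasonSum (j m : ℕ) (a : Fin (m + 1) → R) : MvPolynomial (Fin 2) R :=
  ∑ k : Fin (m + 1), C (a k) * gleasonF ^ (j - 3 * (k : ℕ)) * gleasonG ^ (k : ℕ)

noncomputable def gleasonMatrix (j m : ℕ) : Matrix (Fin (m + 1)) (Fin (m + 1)) R :=
  fun i k =>
    (dehomogenize (gleasonF ^ (j - 3 * (k : ℕ)) * gleasonG ^ (k : ℕ))).coeff (3 * (i : ℕ))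

theorem gleasonMatrix_isLowerTriangular :
    (gleasonMatrix j m : Matrix _ _ R).IsLowerTriangular :=
  fun _ _ hik => coeff_dehomogenize_gleasonF_pow_mul_gleasonG_pow_of_lt hik

theorem det_gleasonMatrix : (gleasonMatrix j m : Matrix _ _ R).det = 1 := by
  rw [Matrix.det_of_isLowerTriangular _ gleasonMatrix_isLowerTriangular]
  exact Finset.prod_eq_one fun k _ => coeff_dehomogenize_gleasonF_pow_mul_gleasonG_pow_self j k

theorem isHomogeneous_gleasonSum (hm : 3 * m ≤ j) (a : Fin (m + 1) → R) :
    (gleasonSum j m a).IsHomogeneous (4 * j) :=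
  IsHomogeneous.sum _ _ _ fun k _ => by
    rw [mul_assoc]
    exact (isHomogeneous_gleasonF_pow_mul_gleasonG_pow (by omega)).C_mul _

theorem coeff_gleasonSum (hm : 3 * m ≤ j) (a : Fin (m + 1) → R) (i : Fin (m + 1)) :
    (gleasonSum j m a).coeff
        (Finsupp.single 0 (4 * j - 3 * (i : ℕ)) + Finsupp.single 1 (3 * (i : ℕ))) =
      (gleasonMatrix j m *ᵥ a) i := by
  rw [(isHomogeneous_gleasonSum hm a).coeff_eq_coeff_dehomogenize (by omega), gleasonSum,
    map_sum, Polynomial.finsetSum_coeff]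
  simp [Matrix.mulVec, dotProduct, gleasonMatrix, mul_comm, mul_assoc]

theorem gleasonSum_conditions_iff_mulVec_eq_single (hm : 3 * m ≤ j) (a : Fin (m + 1) → R) :
    ((gleasonSum j m a).coeff (Finsupp.single 0 (4 * j)) = 1 ∧
      ∀ i : ℕ, 1 ≤ i → i ≤ m →
        (gleasonSum j m a).coeff
          (Finsupp.single 0 (4 * j - 3 * i) + Finsupp.single 1 (3 * i)) = 0) ↔
      gleasonMatrix j m *ᵥ a = Pi.single 0 1 := by
  rw [Fin.eq_pi_single_zero_iff, ← coeff_gleasonSum hm a 0]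
  refine and_congr (by simp) (forall₂_congr fun i _ => forall_congr' fun hi => ?_)
  rw [← coeff_gleasonSum hm a ⟨i, Nat.lt_succ_of_le hi⟩]

end Extremal

/-- For each `n` divisible by 4, with `j = n/4` and `m = ⌊j/3⌋ = n/12`, there exist
unique complex numbers `a_0, …, a_m` such that
`∑ i, a_i f^(j-3i) g^i` (with `f = X^4 + 8XY^3`, `g = Y^3(X^3-Y^3)^3`) has the form
`X^n + ∑_{i=m+1}^{n/3} A*_{3i} X^(n-3i) Y^(3i)`, i.e. its coefficient of `X^n` is 1 and
its coefficients of `X^(n-3i) Y^(3i)` vanish for `1 ≤ i ≤ m`. -/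
theorem extremalWE3_existsUnique (n : ℕ) (hn : 4 ∣ n) :
    ∃! a : Fin (n / 12 + 1) → ℂ,
      (∑ i : Fin (n / 12 + 1),
          C (a i) * ((X 0 : MvPolynomial (Fin 2) ℂ) ^ 4 + 8 * X 0 * X 1 ^ 3) ^ (n / 4 - 3 * (i : ℕ))
            * ((X 1 : MvPolynomial (Fin 2) ℂ) ^ 3 * (X 0 ^ 3 - X 1 ^ 3) ^ 3) ^ (i : ℕ)).coeff
          (Finsupp.single 0 n) = 1 ∧
      ∀ i : ℕ, 1 ≤ i → i ≤ n / 12 →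
        (∑ i : Fin (n / 12 + 1),
          C (a i) * ((X 0 : MvPolynomial (Fin 2) ℂ) ^ 4 + 8 * X 0 * X 1 ^ 3) ^ (n / 4 - 3 * (i : ℕ))
            * ((X 1 : MvPolynomial (Fin 2) ℂ) ^ 3 * (X 0 ^ 3 - X 1 ^ 3) ^ 3) ^ (i : ℕ)).coeff
          (Finsupp.single 0 (n - 3 * i) + Finsupp.single 1 (3 * i)) = 0 := by
  obtain ⟨j, rfl⟩ := hn
  rw [show 4 * j / 4 = j by omega]
  have hunit : IsUnit (gleasonMatrix j (4 * j / 12) : Matrix _ _ ℂ) := by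
    rw [Matrix.isUnit_iff_isUnit_det, det_gleasonMatrix]
    exact isUnit_one
  refine (existsUnique_congr fun a =>
    gleasonSum_conditions_iff_mulVec_eq_single (by omega) a).mpr ?_
  exact Function.Bijective.existsUnique
    ⟨Matrix.mulVec_injective_of_isUnit hunit, Matrix.mulVec_surjective_iff_isUnit.mpr hunit⟩ _
end
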